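/- arXiv:2410.21864 — 3 statements merged into one kernel-verified Lean document; each statement's English description precedes it below -/
import Mathlib

section
/- Let a, c be positive integers with a² > c > 1, a divides c - 1, 2^(c-1) ≡ 1 (mod c), and for every prime p dividing a we have gcd(2^((c-1)/p) - 1, c) = 1. Then c is prime. -/
/-!
Let `q` be a prime factor of `c`. In `ZMod q` the order of `2` divides `c - 1`, but by the gcd
condition it divides no `(c - 1) / p` with `p` a prime factor of `a`; hence `a` divides the order
of `2`, which divides `q - 1`. Every prime factor of `c` thus exceeds `a > √c`, so `c` is prime.
-/

theorem dvd_orderOf_of_pow_div_prime_ne_one {G : Type*} [Monoid G] {x : G} {a n : ℕ}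
    (hx : x ^ n = 1) (ha : a ∣ n) (hdiv : ∀ p : ℕ, p.Prime → p ∣ a → x ^ (n / p) ≠ 1) :
    a ∣ orderOf x := by
  obtain ⟨m, rfl⟩ := orderOf_dvd_of_pow_eq_one hx
  -- A common prime factor `p` of `a` and `m` would give `orderOf x ∣ orderOf x * m / p`.
  have hcop : a.Coprime m := Nat.coprime_of_dvd fun p hp hpa ⟨k, hk⟩ => hdiv p hp hpa <| by
    rw [hk, mul_left_comm, Nat.mul_div_cancel_left _ hp.pos, pow_mul, pow_orderOf_eq_one, one_pow]
  exact hcop.dvd_of_dvd_mul_right ha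

theorem ZMod.dvd_sub_one_of_pow_div_prime_ne_one {q : ℕ} [Fact q.Prime] {x : ZMod q} {a n : ℕ}
    (hn : n ≠ 0) (hx : x ^ n = 1) (ha : a ∣ n)
    (hdiv : ∀ p : ℕ, p.Prime → p ∣ a → x ^ (n / p) ≠ 1) : a ∣ q - 1 := by
  have hx0 : x ≠ 0 := by
    rintro rfl
    simp [zero_pow hn] at hx
  exact (dvd_orderOf_of_pow_div_prime_ne_one hx ha hdiv).trans (ZMod.orderOf_dvd_card_sub_one hx0)

theorem ZMod.natCast_eq_one_iff_dvd_sub_one {q m : ℕ} (hm : 1 ≤ m) :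
    (m : ZMod q) = 1 ↔ q ∣ m - 1 := by
  rw [← Nat.cast_one, ZMod.natCast_eq_natCast_iff, Nat.ModEq.comm, Nat.modEq_iff_dvd' hm]

theorem Nat.dvd_sub_one_of_prime_dvd_of_pow_div_prime_coprime {a b c q : ℕ} (hb : 0 < b)
    (hc : 1 < c) (hac : a ∣ c - 1) (hpow : b ^ (c - 1) ≡ 1 [MOD c])
    (hgcd : ∀ p : ℕ, p.Prime → p ∣ a → Nat.gcd (b ^ ((c - 1) / p) - 1) c = 1)
    (hq : q.Prime) (hqc : q ∣ c) : a ∣ q - 1 := by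
  have := Fact.mk hq
  have hpow_q : (b : ZMod q) ^ (c - 1) = 1 := by
    exact_mod_cast (ZMod.natCast_eq_natCast_iff _ _ _).mpr (hpow.of_dvd hqc)
  refine ZMod.dvd_sub_one_of_pow_div_prime_ne_one (by omega) hpow_q hac fun p hp hpa h => ?_
  have hq_dvd : q ∣ b ^ ((c - 1) / p) - 1 :=
    (ZMod.natCast_eq_one_iff_dvd_sub_one (Nat.one_le_pow _ _ hb)).mp (by exact_mod_cast h)
  have hq_one : q ∣ 1 := hgcd p hp hpa ▸ Nat.dvd_gcd hq_dvd hqc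
  exact hq.one_lt.ne' (Nat.dvd_one.mp hq_one)

theorem Nat.prime_of_lt_sq_of_forall_prime_dvd_le {a c : ℕ} (hc : 1 < c) (hca : c < a ^ 2)
    (h : ∀ q : ℕ, q.Prime → q ∣ c → a ≤ q) : c.Prime := by
  by_contra hnp
  have hle : a ≤ c.minFac := h _ (Nat.minFac_prime (by omega)) (Nat.minFac_dvd c)
  have hsq : c.minFac ^ 2 ≤ c := Nat.minFac_sq_le_self (by omega) hnp
  have : a ^ 2 ≤ c.minFac ^ 2 := Nat.pow_le_pow_left hle 2
  omega

/-- Pocklington-style primality criterion. -/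
theorem pocklington_style (a c : ℕ) (hac : a ^ 2 > c) (hc : 1 < c)
    (hdvd : a ∣ c - 1) (hpow : 2 ^ (c - 1) ≡ 1 [MOD c])
    (hgcd : ∀ p : ℕ, p.Prime → p ∣ a → Nat.gcd (2 ^ ((c - 1) / p) - 1) c = 1) :
    c.Prime := by
  refine Nat.prime_of_lt_sq_of_forall_prime_dvd_le hc hac fun q hq hqc => ?_
  have ha : a ∣ q - 1 :=
    Nat.dvd_sub_one_of_prime_dvd_of_pow_div_prime_coprime two_pos hc hdvd hpow hgcd hq hqc
  exact (Nat.le_of_dvd (by have := hq.two_le; omega) ha).trans (Nat.sub_le q 1)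
end

section
/- Let d ≥ 2 be a squarefree integer with d ≡ 1 (mod 4), let K = ℚ(√d), ε > 1 the fundamental unit of the ring of integers O_K = ℤ[(1+√d)/2], and write ε = x + y·(1+√d)/2 with x, y ∈ ℕ. If d is prime and there exists a unit η of the order O_d = ℤ + d·O_K with 1 < η < ε^d, then d divides y. -/
/-- The ring of integers `ℤ[(1+√d)/2]` of `ℚ(√d)` (for `d ≡ 1 mod 4`),
viewed as a subset of `ℝ`. -/
def ringOfInts (d : ℕ) : Set ℝ :=
  {α | ∃ x y : ℤ, α = x + y * ((1 + Real.sqrt d) / 2)}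

/-- The order `ℤ + d·O_K` of conductor `d`, viewed as a subset of `ℝ`. -/
def condOrder (d : ℕ) : Set ℝ :=
  {α | ∃ x y : ℤ, α = x + y * (d * ((1 + Real.sqrt d) / 2))}

/-- `α` is a unit of the subring (given as a subset of `ℝ`) `S`. -/
def IsUnitIn (S : Set ℝ) (α : ℝ) : Prop :=
  α ∈ S ∧ ∃ β ∈ S, α * β = 1

/-- `ε` is the fundamental unit (`> 1`) of `O_K`: it is the smallest unit
exceeding `1`. -/
def IsFundUnit (d : ℕ) (ε : ℝ) : Prop :=
  IsUnitIn (ringOfInts d) ε ∧ 1 < ε ∧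
    ∀ η : ℝ, IsUnitIn (ringOfInts d) η → 1 < η → ε ≤ η

/-!
Since `ε` is the least unit `> 1` of `O_K` and `η ∈ O_d ⊆ O_K`, we get `η = ε ^ k` with
`0 < k < d`. Doubling maps `O_K` into `ℤ[√d]`, with `2ε = u + y√d` for `u = 2x + y`.
Modulo `d`, `ℤ[√d]` becomes the dual numbers over `𝔽_d`, so the `√d`-coordinate of
`(2ε) ^ k = 2 ^ k η` is `≡ k u ^ (k - 1) y`; it is divisible by `d` because `η ∈ O_d`.
As `d ∤ k`, and `d ∤ u` because `2ε` divides `4` in `ℤ[√d]`, the prime `d` divides `y`.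
-/

namespace Zsqrtd

def toDualNumber (d : ℕ) : ℤ√(d : ℤ) →+* DualNumber (ZMod d) :=
  lift ⟨DualNumber.eps, by
    rw [DualNumber.eps_mul_eps, Int.cast_natCast, ← TrivSqZeroExt.inl_natCast, ZMod.natCast_self,
      TrivSqZeroExt.inl_zero]⟩

theorem intCast_im_pow (d : ℕ) (z : ℤ√(d : ℤ)) (k : ℕ) :
    (((z ^ k).im : ℤ) : ZMod d) = k * ((z.re : ZMod d) ^ (k - 1) * z.im) := by
  simpa [toDualNumber] using congrArg TrivSqZeroExt.snd (map_pow (toDualNumber d) z k)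

theorem not_dvd_re_of_mul_eq_intCast {d n : ℤ} {z w : ℤ√d} (h : z * w = n) (hn : ¬ d ∣ n) :
    ¬ d ∣ z.re := by
  intro hz
  have hre := congrArg re h
  rw [re_mul, re_intCast] at hre
  exact hn (hre ▸ (hz.mul_right _).add (by rw [mul_assoc]; exact dvd_mul_right _ _))

theorem dvd_im_of_dvd_im_pow {p : ℕ} (hp : p.Prime) {z : ℤ√(p : ℤ)} (hre : ¬ (p : ℤ) ∣ z.re)
    {k : ℕ} (hk0 : k ≠ 0) (hkp : k < p) (h : (p : ℤ) ∣ (z ^ k).im) : (p : ℤ) ∣ z.im := by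
  have := Fact.mk hp
  rw [← ZMod.intCast_zmod_eq_zero_iff_dvd] at h hre ⊢
  have hk : (k : ZMod p) ≠ 0 := by
    rw [Ne, ZMod.natCast_eq_zero_iff]
    exact fun hdvd => (Nat.le_of_dvd (Nat.pos_of_ne_zero hk0) hdvd).not_gt hkp
  rw [intCast_im_pow] at h
  simpa [hk, hre] using h

end Zsqrtd

namespace IsUnitIn

theorem mono {S T : Set ℝ} {α : ℝ} (hST : S ⊆ T) (hα : IsUnitIn S α) : IsUnitIn T α :=
  ⟨hST hα.1, hα.2.imp fun _ hβ => ⟨hST hβ.1, hβ.2⟩⟩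

variable {S : Submonoid ℝ} {α β : ℝ}

theorem mul (hα : IsUnitIn S α) (hβ : IsUnitIn S β) : IsUnitIn S (α * β) := by
  obtain ⟨hαS, α', hα'S, hαα'⟩ := hα
  obtain ⟨hβS, β', hβ'S, hββ'⟩ := hβ
  exact ⟨S.mul_mem hαS hβS, α' * β', S.mul_mem hα'S hβ'S, by
    linear_combination β * β' * hαα' + hββ'⟩

theorem inv (hα : IsUnitIn S α) : IsUnitIn S α⁻¹ := by
  obtain ⟨hαS, α', hα'S, hαα'⟩ := hα
  rw [inv_eq_of_mul_eq_one_right hαα']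
  exact ⟨hα'S, α, hαS, by rw [mul_comm, hαα']⟩

theorem pow (hα : IsUnitIn S α) (n : ℕ) : IsUnitIn S (α ^ n) := by
  induction n with
  | zero => exact ⟨S.one_mem, 1, S.one_mem, by simp⟩
  | succ n ih => rw [pow_succ]; exact ih.mul hα

end IsUnitIn

theorem exists_eq_pow_of_isUnitIn {S : Submonoid ℝ} {ε η : ℝ} (hε : IsUnitIn S ε) (hε1 : 1 < ε)
    (hmin : ∀ θ, IsUnitIn S θ → 1 < θ → ε ≤ θ) (hη : IsUnitIn S η) (hη1 : 1 ≤ η) :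
    ∃ k : ℕ, η = ε ^ k := by
  obtain ⟨k, hk, hk'⟩ := exists_nat_pow_near hη1 hε1
  have hpos : 0 < ε ^ k := by positivity
  have hθ1 : 1 ≤ η * (ε ^ k)⁻¹ := by rwa [← div_eq_mul_inv, one_le_div hpos]
  have hθε : η * (ε ^ k)⁻¹ < ε := by rwa [← div_eq_mul_inv, div_lt_iff₀ hpos, ← pow_succ']
  have hθ : IsUnitIn S (η * (ε ^ k)⁻¹) := hη.mul (hε.pow k).inv
  refine ⟨k, ?_⟩
  obtain hθ1 | hθ1 := hθ1.eq_or_lt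
  · field_simp at hθ1; exact hθ1.symm
  · exact absurd (hmin _ hθ hθ1) hθε.not_ge

section RingOfInts

open Zsqrtd

theorem sq_one_add_sqrt_div_two {d m : ℕ} (hm : d = 4 * m + 1) :
    ((1 + √d) / 2) ^ 2 = m + (1 + √d) / 2 := by
  have hm' : (d : ℝ) = 4 * m + 1 := by exact_mod_cast hm
  linear_combination (1 / 4 : ℝ) * Real.sq_sqrt d.cast_nonneg + (1 / 4 : ℝ) * hm'

def ringOfIntsSubmonoid (d : ℕ) (hd : d % 4 = 1) : Submonoid ℝ where
  carrier := ringOfInts d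
  one_mem' := ⟨1, 0, by simp⟩
  mul_mem' := by
    rintro _ _ ⟨a, b, rfl⟩ ⟨c, e, rfl⟩
    obtain ⟨m, hm⟩ : ∃ m : ℕ, d = 4 * m + 1 := ⟨d / 4, by omega⟩
    refine ⟨a * c + m * b * e, a * e + b * c + b * e, ?_⟩
    push_cast
    linear_combination (b * e : ℝ) * sq_one_add_sqrt_div_two hm

theorem condOrder_subset_ringOfInts (d : ℕ) : condOrder d ⊆ ringOfInts d := by
  rintro _ ⟨a, b, rfl⟩
  exact ⟨a, b * d, by push_cast; ring⟩

theorem toReal_mk_two_mul_add (d : ℕ) (a b : ℤ) :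
    toReal (Int.natCast_nonneg d) ⟨2 * a + b, b⟩ = 2 * (a + b * ((1 + √d) / 2)) := by
  simp only [toReal_apply, Int.cast_add, Int.cast_mul, Int.cast_ofNat, Int.cast_natCast]
  ring

theorem exists_toReal_eq_two_mul_of_mem_ringOfInts {d : ℕ} {α : ℝ} (h : α ∈ ringOfInts d) :
    ∃ z : ℤ√(d : ℤ), toReal (Int.natCast_nonneg d) z = 2 * α := by
  obtain ⟨a, b, rfl⟩ := h
  exact ⟨_, toReal_mk_two_mul_add d a b⟩

theorem exists_toReal_eq_two_mul_of_mem_condOrder {d : ℕ} {α : ℝ} (h : α ∈ condOrder d) :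
    ∃ z : ℤ√(d : ℤ), toReal (Int.natCast_nonneg d) z = 2 * α ∧ (d : ℤ) ∣ z.im := by
  obtain ⟨a, b, rfl⟩ := h
  refine ⟨⟨2 * a + d * b, d * b⟩, ?_, dvd_mul_right _ _⟩
  rw [toReal_mk_two_mul_add]
  push_cast
  ring

end RingOfInts

open Zsqrtd in
theorem dvd_y_of_small_unit_in_condOrder_general (d : ℕ) (hd4 : d % 4 = 1) (hdp : Nat.Prime d)
    (ε : ℝ) (hε : IsFundUnit d ε) (x y : ℕ)
    (hxy : ε = x + y * ((1 + Real.sqrt d) / 2))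
    (η : ℝ) (hη : IsUnitIn (condOrder d) η) (hη1 : 1 < η) (hηε : η < ε ^ d) :
    d ∣ y := by
  obtain ⟨hεunit, hε1, hmin⟩ := hε
  obtain ⟨k, rfl⟩ := exists_eq_pow_of_isUnitIn (S := ringOfIntsSubmonoid d hd4) hεunit hε1 hmin
    (hη.mono (condOrder_subset_ringOfInts d)) hη1.le
  have hk0 : k ≠ 0 := by rintro rfl; simp at hη1
  have hkd : k < d := (pow_lt_pow_iff_right₀ hε1).mp hηε
  have hinj := toReal_injective (Int.natCast_nonneg d)
    fun n h => (Nat.prime_iff_prime_int.mp hdp).not_isSquare ⟨n, h⟩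
  set z : ℤ√(d : ℤ) := ⟨2 * x + y, y⟩
  have hz : toReal (Int.natCast_nonneg d) z = 2 * ε := by
    rw [toReal_mk_two_mul_add, hxy]; push_cast; rfl
  obtain ⟨w, hw, hdw⟩ := exists_toReal_eq_two_mul_of_mem_condOrder hη.1
  obtain ⟨γ, hγ, hεγ⟩ := hεunit.2
  obtain ⟨w', hw'⟩ := exists_toReal_eq_two_mul_of_mem_ringOfInts hγ
  have hzw' : z * w' = (4 : ℤ) := hinj <| by
    rw [map_mul, hz, hw', map_intCast]; linear_combination 4 * hεγ
  have hre : ¬ (d : ℤ) ∣ z.re := not_dvd_re_of_mul_eq_intCast hzw' fun h => by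
    have := Int.le_of_dvd (by norm_num) h; have := hdp.two_le; omega
  have hzk : z ^ k = ((2 ^ (k - 1) : ℤ) : ℤ√(d : ℤ)) * w := hinj <| by
    rw [map_pow, map_mul, hz, hw, map_intCast, mul_pow, ← pow_sub_one_mul hk0]; push_cast; ring
  have hdk : (d : ℤ) ∣ (z ^ k).im := by
    rw [hzk, im_mul, re_intCast, im_intCast, zero_mul, add_zero]
    exact dvd_mul_of_dvd_right hdw _
  exact Int.natCast_dvd_natCast.mp (dvd_im_of_dvd_im_pow hdp hre hk0 hkd hdk)

theorem dvd_y_of_small_unit_in_condOrder (d : ℕ) (hd : 2 ≤ d)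
    (hsf : Squarefree d) (hd4 : d % 4 = 1) (hdp : Nat.Prime d)
    (ε : ℝ) (hε : IsFundUnit d ε) (x y : ℕ)
    (hxy : ε = x + y * ((1 + Real.sqrt d) / 2))
    (η : ℝ) (hη : IsUnitIn (condOrder d) η) (hη1 : 1 < η) (hηε : η < ε ^ d) :
    d ∣ y :=
  dvd_y_of_small_unit_in_condOrder_general d hd4 hdp ε hε x y hxy η hη hη1 hηε
end

section
/- Let d ≥ 2 be squarefree with d ≡ 1 (mod 4), ε = x + y·(1+√d)/2 the fundamental unit of O_K (x, y ∈ ℕ), and ε' = X + Y√d the smallest positive power of ε in ℤ[√d] (X, Y ∈ ℕ). If d ∣ y then d ∣ Y, and if d ∣ Y then d ∣ 3y. -/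
/-- `ℤ[√d]`, viewed as a subset of `ℝ`. -/
def zSqrtd (d : ℕ) : Set ℝ :=
  {α | ∃ X Y : ℤ, α = X + Y * Real.sqrt d}

lemma sqrt_irr (d : ℕ) (hd : 2 ≤ d) (hsf : Squarefree d) : Irrational (Real.sqrt d) := by
  rw [irrational_sqrt_natCast_iff]
  rintro ⟨r, hr⟩
  have h1 := Nat.isUnit_iff.mp (hsf r (by rw [hr]))
  rw [h1] at hr
  omega

lemma uniq (d : ℕ) (hirr : Irrational (Real.sqrt d)) (a b c e : ℤ)
    (h : (a : ℝ) + b * Real.sqrt d = c + e * Real.sqrt d) : a = c ∧ b = e := by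
  rcases eq_or_ne b e with hbe | hbe
  · subst hbe
    refine ⟨?_, rfl⟩
    have : (a : ℝ) = c := by linarith
    exact_mod_cast this
  · exfalso
    apply hirr
    refine ⟨((a - c : ℤ) : ℚ) / ((e - b : ℤ) : ℚ), ?_⟩
    have hne : ((e - b : ℤ) : ℝ) ≠ 0 := by
      exact_mod_cast sub_ne_zero.mpr (Ne.symm hbe)
    push_cast
    rw [div_eq_iff (by exact_mod_cast hne)]
    linarith

lemma zmod8_ne : ∀ a b r : ZMod 8, (2*a+1)^2 - (8*r+1)*(2*b+1)^2 ≠ 4 := by decide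

lemma zmod8_cube₁ : ∀ a b r : ZMod 8,
    (2*a+1)^3 + 3*(8*r+5)*(2*a+1)*(2*b+1)^2 = 0 := by decide

lemma zmod8_cube₂ : ∀ a b r : ZMod 8,
    3*(2*a+1)^2*(2*b+1) + (8*r+5)*(2*b+1)^3 = 0 := by decide

theorem dvd_y_iff_dvd_Y (d : ℕ) (hd : 2 ≤ d) (hsf : Squarefree d)
    (hd4 : d % 4 = 1) (ε : ℝ) (hε : IsFundUnit d ε)
    (x y : ℕ) (hxy : ε = x + y * ((1 + Real.sqrt d) / 2))
    (k : ℕ) (hk : 0 < k) (hmem : ε ^ k ∈ zSqrtd d)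
    (hmin : ∀ j : ℕ, 0 < j → ε ^ j ∈ zSqrtd d → k ≤ j)
    (X Y : ℕ) (hXY : ε ^ k = X + Y * Real.sqrt d) :
    (d ∣ y → d ∣ Y) ∧ (d ∣ Y → d ∣ 3 * y) := by
  set s : ℝ := Real.sqrt d with hs
  have hirr : Irrational s := sqrt_irr d hd hsf
  have hs2 : s * s = (d : ℝ) := Real.mul_self_sqrt (by positivity)
  obtain ⟨β, ⟨u, v, hβ⟩, hβ1⟩ := hε.1.2
  set T : ℤ := 2 * (x : ℤ) + y with hT
  set U : ℤ := 2 * u + v with hU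
  have h2e : 2 * ε = (T : ℝ) + (y : ℝ) * s := by rw [hxy, hT]; push_cast; ring
  have h2b : 2 * β = (U : ℝ) + (v : ℝ) * s := by rw [hβ, hU]; push_cast; ring
  have hprod : ((T : ℝ) + y * s) * ((U : ℝ) + v * s) = 4 := by
    rw [← h2e, ← h2b]; linear_combination 4 * hβ1
  have hun := uniq d hirr (T * U + y * v * d) (T * v + y * U) 4 0
    (by push_cast; linear_combination hprod - (y : ℝ) * (v : ℝ) * hs2)
  -- norm equation : (T² - d y²)(U² - d v²) = 16
  have hnorm : (T ^ 2 - d * y ^ 2) * (U ^ 2 - d * v ^ 2) = 16 := by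
    have : (T ^ 2 - (d:ℤ) * y ^ 2) * (U ^ 2 - d * v ^ 2)
        = (T * U + y * v * d) ^ 2 - d * (T * v + y * U) ^ 2 := by ring
    rw [this, hun.1, hun.2]; ring
  obtain ⟨q, hq⟩ : ∃ q : ℤ, (d : ℤ) = 4 * q + 1 := ⟨(d / 4 : ℕ), by omega⟩
  have hm : T ^ 2 - (d:ℤ) * y ^ 2 = 4 * ((x:ℤ)^2 + x * y - q * y^2) := by
    rw [hT, hq]; ring
  have hn : U ^ 2 - (d:ℤ) * v ^ 2 = 4 * (u^2 + u * v - q * v^2) := by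
    rw [hU, hq]; ring
  have hpm : T ^ 2 - (d:ℤ) * y ^ 2 = 4 ∨ T ^ 2 - (d:ℤ) * y ^ 2 = -4 := by
    have h16 : ((x:ℤ)^2 + x * y - q * y^2) * (u^2 + u * v - q * v^2) = 1 := by
      have h := hnorm
      rw [hm, hn] at h
      linarith
    rcases Int.eq_one_or_neg_one_of_mul_eq_one' h16 with ⟨h1,_⟩ | ⟨h1,_⟩
    · left; rw [hm, h1]; ring
    · right; rw [hm, h1]; ring
  have hdodd : d % 2 = 1 := by omega
  have c2 : Nat.Coprime d 2 := Nat.coprime_two_right.mpr (Nat.odd_iff.mpr hdodd)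
  rcases Nat.even_or_odd y with hye | hyo
  · -- y even : k = 1
    obtain ⟨m, hmy⟩ := hye
    have hmem1 : ε ∈ zSqrtd d := by
      refine ⟨(x:ℤ) + m, m, ?_⟩
      rw [← hs, hxy]; push_cast [hmy]; ring
    have hk1 : k = 1 := le_antisymm (hmin 1 one_pos (by simpa using hmem1)) hk
    subst hk1
    rw [pow_one] at hXY
    have hε1 : ε = ((x:ℝ) + m) + (m:ℝ) * s := by rw [hxy]; push_cast [hmy]; ring
    have huq := uniq d hirr ((x:ℤ) + m) m X Y
      (by push_cast; linear_combination hε1.symm.trans hXY)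
    have hmY : m = Y := by exact_mod_cast huq.2
    have hy2Y : y = 2 * Y := by omega
    constructor
    · intro hdy
      rw [hy2Y, mul_comm] at hdy
      exact c2.dvd_of_dvd_mul_right hdy
    · intro hdY
      exact Dvd.dvd.mul_left (hy2Y ▸ hdY.mul_left 2) 3
  · -- y odd : k = 3
    obtain ⟨w, hw⟩ := hyo
    have hTodd : T = 2 * ((x:ℤ) + w) + 1 := by rw [hT]; push_cast [hw]; ring
    have hd8 : d % 8 = 5 := by
      by_contra h8
      have h81 : d % 8 = 1 := by omega
      obtain ⟨r8, hr8⟩ : ∃ r : ℤ, (d:ℤ) = 8 * r + 1 := ⟨(d / 8 : ℕ), by push_cast; omega⟩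
      have hc : ((T ^ 2 - (d:ℤ) * y ^ 2 : ℤ) : ZMod 8) = 4 := by
        rcases hpm with h | h <;> rw [h] <;> decide
      rw [hTodd, hr8] at hc
      push_cast [hw] at hc
      apply zmod8_ne ((x : ZMod 8) + w) (w : ZMod 8) (r8 : ZMod 8)
      linear_combination (norm := (push_cast; ring1)) hc
    obtain ⟨r8, hr8⟩ : ∃ r : ℤ, (d:ℤ) = 8 * r + 5 := ⟨(d / 8 : ℕ), by push_cast; omega⟩
    have hP8 : (8:ℤ) ∣ T ^ 3 + 3 * d * T * y ^ 2 := by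
      have hz : ((T ^ 3 + 3 * (d:ℤ) * T * y ^ 2 : ℤ) : ZMod 8) = 0 := by
        rw [hTodd, hr8]
        push_cast [hw]
        linear_combination (norm := (push_cast; ring1))
          zmod8_cube₁ ((x : ZMod 8) + w) (w : ZMod 8) (r8 : ZMod 8)
      exact_mod_cast (ZMod.intCast_zmod_eq_zero_iff_dvd _ 8).mp hz
    have hQ8 : (8:ℤ) ∣ 3 * T ^ 2 * y + d * y ^ 3 := by
      have hz : ((3 * T ^ 2 * y + (d:ℤ) * y ^ 3 : ℤ) : ZMod 8) = 0 := by
        rw [hTodd, hr8]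
        push_cast [hw]
        linear_combination (norm := (push_cast; ring1))
          zmod8_cube₂ ((x : ZMod 8) + w) (w : ZMod 8) (r8 : ZMod 8)
      exact_mod_cast (ZMod.intCast_zmod_eq_zero_iff_dvd _ 8).mp hz
    obtain ⟨P, hP⟩ := hP8
    obtain ⟨Q, hQ⟩ := hQ8
    have hcube : ε ^ 3 = (P:ℝ) + (Q:ℝ) * s := by
      have e1 : 8 * ε ^ 3 = ((T:ℝ) + y * s) ^ 3 := by
        linear_combination (4 * ε ^ 2 + 2 * ε * ((T:ℝ) + (y:ℝ) * s) + ((T:ℝ) + (y:ℝ) * s) ^ 2) * h2e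
      have e2 : ((T:ℝ) + (y:ℝ) * s) ^ 3
          = ((T ^ 3 + 3 * (d:ℤ) * T * y ^ 2 : ℤ) : ℝ) + ((3 * T ^ 2 * y + (d:ℤ) * y ^ 3 : ℤ) : ℝ) * s := by
        push_cast
        linear_combination (3 * (T:ℝ) * (y:ℝ) ^ 2 + (y:ℝ) ^ 3 * s) * hs2
      rw [hP, hQ] at e2
      rw [e2] at e1
      push_cast at e1
      linarith
    have hk3 : k ≤ 3 := hmin 3 (by norm_num) ⟨P, Q, by rw [← hs]; exact hcube⟩
    have hoT : Odd T := ⟨(x:ℤ) + w, by rw [hTodd]⟩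
    have hoy : Odd (y:ℤ) := ⟨(w:ℤ), by push_cast [hw]; ring⟩
    have hkne1 : k ≠ 1 := by
      intro h1
      rw [h1, pow_one] at hXY
      have huq := uniq d hirr T y (2 * X) (2 * Y)
        (by push_cast; linear_combination (-1 : ℝ) * h2e + 2 * hXY)
      have : (y:ℤ) = 2 * Y := huq.2
      omega
    have hkne2 : k ≠ 2 := by
      intro h2
      rw [h2] at hXY
      have huq := uniq d hirr (T ^ 2 + d * y ^ 2) (2 * T * y) (4 * X) (4 * Y)
        (by push_cast
            linear_combination (-(2 * ε + ((T:ℝ) + (y:ℝ) * s))) * h2e + 4 * hXY - (y:ℝ) ^ 2 * hs2)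
      have hTy : T * (y:ℤ) = 2 * Y := by linarith [huq.2]
      have : Odd (T * (y:ℤ)) := hoT.mul hoy
      rw [hTy] at this
      exact (Int.not_odd_iff_even.mpr ⟨Y, by ring⟩) this
    have hk3' : k = 3 := by omega
    rw [hk3'] at hXY
    have huq := uniq d hirr P Q X Y
      (by push_cast; linear_combination hcube.symm.trans hXY)
    have h8Y : 3 * T ^ 2 * (y:ℤ) + d * y ^ 3 = 8 * (Y:ℤ) := by rw [hQ, huq.2]
    have hcop : Nat.Coprime d T.natAbs := by
      set g := Nat.gcd d T.natAbs with hg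
      have hgd : g ∣ d := Nat.gcd_dvd_left _ _
      have hgT : (g:ℤ) ∣ T := Int.dvd_natAbs.mp (Int.natCast_dvd_natCast.mpr (Nat.gcd_dvd_right _ _))
      have hg4 : (g:ℤ) ∣ 4 := by
        have h1 : (g:ℤ) ∣ T ^ 2 := dvd_pow hgT two_ne_zero
        have h2 : (g:ℤ) ∣ (d:ℤ) * y ^ 2 := (Int.natCast_dvd_natCast.mpr hgd).mul_right _
        rcases hpm with h | h
        · rw [← h]; exact dvd_sub h1 h2
        · have h3 : (g:ℤ) ∣ (-4 : ℤ) := by rw [← h]; exact dvd_sub h1 h2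
          exact dvd_neg.mp h3
      have hg4' : g ∣ 4 := Int.natCast_dvd_natCast.mp (by exact_mod_cast hg4)
      have hgle : g ≤ 4 := Nat.le_of_dvd (by norm_num) hg4'
      have hg2 : ¬ 2 ∣ g := fun h2 => by
        have : 2 ∣ d := h2.trans hgd
        omega
      show g = 1
      interval_cases g <;> omega
    have cop8 : Nat.Coprime d 8 := by
      have := c2.pow_right 3
      norm_num at this
      exact this
    constructor
    · intro hdy
      have hdy' : (d:ℤ) ∣ (y:ℤ) := Int.natCast_dvd_natCast.mpr hdy
      have hdvd : (d:ℤ) ∣ 8 * (Y:ℤ) := by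
        rw [← h8Y]
        exact dvd_add (hdy'.mul_left _) ((hdy'.pow (by norm_num)).mul_left _)
      have h8Y' : d ∣ 8 * Y := Int.natCast_dvd_natCast.mp (by exact_mod_cast hdvd)
      rw [mul_comm] at h8Y'
      exact cop8.dvd_of_dvd_mul_right h8Y'
    · intro hdY
      have h1 : (d:ℤ) ∣ 8 * (Y:ℤ) := ((Int.natCast_dvd_natCast.mpr hdY).mul_left 8)
      rw [← h8Y] at h1
      have h2 : (d:ℤ) ∣ 3 * T ^ 2 * (y:ℤ) := by
        have h3 := dvd_sub h1 (Dvd.intro (y ^ 3) rfl)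
        simpa using h3
      have hcast : ((3 * y * T.natAbs ^ 2 : ℕ) : ℤ) = 3 * T ^ 2 * (y:ℤ) := by
        push_cast
        rw [sq_abs]
        ring
      have h4 : d ∣ 3 * y * T.natAbs ^ 2 := Int.natCast_dvd_natCast.mp (by rw [hcast]; exact h2)
      exact (hcop.pow_right 2).dvd_of_dvd_mul_right h4
end
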